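/- Let H be a complex Hilbert space and T, A bounded operators on H with polar decompositions T = U_T|T| and A = U_A|A|, such that A commutes with |T|. Then AT = TA if and only if A U_T = U_T A. -/

import Mathlib

open ContinuousLinearMap

noncomputable def absOp {H K : Type*} [NormedAddCommGroup H] [InnerProductSpace ℂ H]
    [CompleteSpace H] [NormedAddCommGroup K] [InnerProductSpace ℂ K] [CompleteSpace K]
    (T : H →L[ℂ] K) : H →L[ℂ] H :=
  CFC.sqrt (ContinuousLinearMap.adjoint T ∘L T)

noncomputable def projCR {H K : Type*} [NormedAddCommGroup H] [InnerProductSpace ℂ H]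
    [CompleteSpace H] [NormedAddCommGroup K] [InnerProductSpace ℂ K] [CompleteSpace K]
    (C : K →L[ℂ] H) : H →L[ℂ] H :=
  letI := (LinearMap.range (C : K →ₗ[ℂ] H)).topologicalClosure.isClosed_topologicalClosure.completeSpace_coe
  (LinearMap.range (C : K →ₗ[ℂ] H)).topologicalClosure.subtypeL ∘L
    Submodule.orthogonalProjectionOnto (LinearMap.range (C : K →ₗ[ℂ] H)).topologicalClosure

/-- `B = U|B|` is the polar decomposition: `U` is a partial isometry (automatic) whose
initial projection `U*U` is the orthogonal projection onto the closure of `range B*`. -/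
noncomputable def IsPolarDecomp {H K : Type*} [NormedAddCommGroup H] [InnerProductSpace ℂ H]
    [CompleteSpace H] [NormedAddCommGroup K] [InnerProductSpace ℂ K] [CompleteSpace K]
    (B U : H →L[ℂ] K) : Prop :=
  B = U ∘L absOp B ∧
    ContinuousLinearMap.adjoint U ∘L U = projCR (ContinuousLinearMap.adjoint B)

/-! For `←`, `A T = A U_T |T| = U_T A |T| = U_T |T| A = T A`. For `→`, the operators `A U_T` and
`U_T A` agree on `range |T|` by the same computation read backwards, and both vanish on
`ker |T| = ker T = ker U_T`, which `A` preserves since it commutes with `|T|`. As `|T|` is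
self-adjoint, the closure of its range and its kernel are orthogonal complements, so they span `H`. -/

open scoped InnerProduct

namespace ContinuousLinearMap

variable {𝕜 E F G : Type*} [RCLike 𝕜] [NormedAddCommGroup E] [InnerProductSpace 𝕜 E]
  [CompleteSpace E] [NormedAddCommGroup F] [InnerProductSpace 𝕜 F] [CompleteSpace F]
  [NormedAddCommGroup G] [NormedSpace 𝕜 G]

theorem ext_of_eqOn_range_of_eqOn_ker_adjoint (S : E →L[𝕜] F) {D₁ D₂ : F →L[𝕜] G}
    (h_range : ∀ x, D₁ (S x) = D₂ (S x)) (h_ker : ∀ y ∈ S†.ker, D₁ y = D₂ y) : D₁ = D₂ := by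
  set K := S.range.topologicalClosure
  have hK : K ≤ (D₁ - D₂).ker :=
    S.range.topologicalClosure_minimal (by rintro _ ⟨x, rfl⟩; simp [h_range]) (isClosed_ker _)
  have hK_orth : Kᗮ ≤ (D₁ - D₂).ker := by
    rw [Submodule.orthogonal_closure, orthogonal_range]
    intro y hy
    simp [h_ker y hy]
  have h_top : (D₁ - D₂).ker = ⊤ :=
    top_le_iff.mp (K.sup_orthogonal_of_hasOrthogonalProjection ▸ sup_le hK hK_orth)
  ext y
  simpa [sub_eq_zero] using h_top.ge (Submodule.mem_top (x := y))

end ContinuousLinearMap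

section PolarDecomposition

variable {H K : Type*} [NormedAddCommGroup H] [InnerProductSpace ℂ H] [CompleteSpace H]
  [NormedAddCommGroup K] [InnerProductSpace ℂ K] [CompleteSpace K]

theorem adjoint_absOp (T : H →L[ℂ] K) : (absOp T)† = absOp T :=
  (IsSelfAdjoint.of_nonneg (CFC.sqrt_nonneg _)).adjoint_eq

theorem absOp_comp_absOp (T : H →L[ℂ] K) : absOp T ∘L absOp T = T† ∘L T :=
  CFC.sqrt_mul_sqrt_self _ ((nonneg_iff_isPositive _).mpr (isPositive_adjoint_comp_self T))

theorem ker_absOp (T : H →L[ℂ] K) : (absOp T).ker = T.ker := by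
  rw [← ker_adjoint_comp_self, adjoint_absOp, absOp_comp_absOp, ker_adjoint_comp_self]

theorem ker_projCR (C : K →L[ℂ] H) : (projCR C).ker = C.rangeᗮ :=
  (Submodule.ker_starProjection _).trans (Submodule.orthogonal_closure _)

theorem IsPolarDecomp.ker_eq_ker {B U : H →L[ℂ] K} (h : IsPolarDecomp B U) : U.ker = B.ker := by
  rw [← ker_adjoint_comp_self U, h.2, ker_projCR, orthogonal_range, adjoint_adjoint]

theorem IsPolarDecomp.comp_comm_of_comp_comm {T U A : H →L[ℂ] H} (hT : IsPolarDecomp T U)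
    (hc : A ∘L absOp T = absOp T ∘L A) (h : A ∘L T = T ∘L A) : A ∘L U = U ∘L A := by
  have hTU : ∀ x, U (absOp T x) = T x := fun x ↦ (DFunLike.congr_fun hT.1 x).symm
  have hU : ∀ z, absOp T z = 0 → U z = 0 := fun z hz ↦ by
    have hz : z ∈ (absOp T).ker := hz
    rwa [ker_absOp, ← hT.ker_eq_ker] at hz
  refine ext_of_eqOn_range_of_eqOn_ker_adjoint (absOp T) (fun x ↦ ?_) (fun y hy ↦ ?_)
  · calc A (U (absOp T x)) = T (A x) := by rw [hTU]; exact DFunLike.congr_fun h x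
      _ = U (A (absOp T x)) := by rw [← hTU]; exact congrArg U (DFunLike.congr_fun hc x).symm
  · replace hy : absOp T y = 0 := by rwa [adjoint_absOp] at hy
    have hAy : absOp T (A y) = 0 := by rw [← comp_apply, ← hc, comp_apply, hy, map_zero]
    simp [hU y hy, hU _ hAy]

end PolarDecomposition

variable {H : Type*} [NormedAddCommGroup H] [InnerProductSpace ℂ H] [CompleteSpace H]

theorem stmt13_general (T A U_T : H →L[ℂ] H)
    (hT : IsPolarDecomp T U_T)
    (hc : A ∘L absOp T = absOp T ∘L A) :
    A ∘L T = T ∘L A ↔ A ∘L U_T = U_T ∘L A := by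
  refine ⟨hT.comp_comm_of_comp_comm hc, fun h ↦ ?_⟩
  rw [hT.1, ← comp_assoc, h, comp_assoc, hc, comp_assoc]

theorem stmt13 (T A U_T U_A : H →L[ℂ] H)
    (hT : IsPolarDecomp T U_T) (hA : IsPolarDecomp A U_A)
    (hc : A ∘L absOp T = absOp T ∘L A) :
    A ∘L T = T ∘L A ↔ A ∘L U_T = U_T ∘L A :=
  stmt13_general T A U_T hT hc
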